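/- arXiv:2505.13710 — 2 statements merged into one kernel-verified Lean document; each statement's English description precedes it below -/
import Mathlib

section
/- For any bipartite quantum state ρ_AB on a finite-dimensional Hilbert space H_A ⊗ H_B with marginal ρ_A = Tr_B(ρ_AB), the operator inequality ρ_AB ≤ dim(H_B)² · (ρ_A ⊗ ω_B) holds, where ω_B = I_B / dim(H_B) is the maximally mixed state on H_B. -/
/-!
Write `K c b = 1 ⊗ |c⟩⟨b|`. Conjugating by the `K c b` averages out the `B` factor:
`Tr_B ρ ⊗ 1 = ∑_{b,c} (K c b)ᴴ ρ (K c b)`. The diagonal family `K b b` sums to `1`, so the operator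
Cauchy–Schwarz inequality `(∑ M_b)ᴴ ρ (∑ M_b) ≤ d ∑ M_bᴴ ρ M_b` gives `ρ ≤ d ∑_b (K b b)ᴴ ρ (K b b)`,
and adding the positive off-diagonal terms gives `ρ ≤ d (Tr_B ρ ⊗ 1) = d² (Tr_B ρ ⊗ ω_B)`.
-/

open Matrix Kronecker ComplexOrder

open scoped MatrixOrder

namespace Matrix

theorem conjTranspose_sum_mul_mul_sum_le {𝕜 ι n m : Type*} [RCLike 𝕜] [Fintype ι] [Fintype n]
    [Finite m] {ρ : Matrix n n 𝕜} (hρ : ρ.PosSemidef) (M : ι → Matrix n m 𝕜) :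
    (∑ i, M i)ᴴ * ρ * ∑ i, M i ≤ Fintype.card ι • ∑ i, (M i)ᴴ * ρ * M i := by
  have h2 : (2 : 𝕜) • (Fintype.card ι • ∑ i, (M i)ᴴ * ρ * M i - (∑ i, M i)ᴴ * ρ * ∑ i, M i) =
      ∑ i, ∑ j, (M i - M j)ᴴ * ρ * (M i - M j) := by
    simp only [conjTranspose_sub, conjTranspose_sum, Matrix.sub_mul, Matrix.mul_sub,
      Finset.sum_sub_distrib, Matrix.sum_mul, Matrix.mul_sum, Finset.sum_const, Finset.card_univ,
      ← Finset.smul_sum]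
    rw [Finset.sum_comm (f := fun i j => (M j)ᴴ * ρ * M i)]
    module
  have hpos : (2 : 𝕜) • (Fintype.card ι • ∑ i, (M i)ᴴ * ρ * M i - (∑ i, M i)ᴴ * ρ * ∑ i, M i)
      |>.PosSemidef := h2 ▸ posSemidef_sum _ fun i _ =>
        posSemidef_sum _ fun j _ => hρ.conjTranspose_mul_mul_same _
  rw [le_iff]
  simpa [smul_smul] using hpos.smul (a := (2⁻¹ : 𝕜)) (by positivity)

section PartialTrace

variable {A B R : Type*} [Fintype B]

def partialTraceRight [AddCommMonoid R] (ρ : Matrix (A × B) (A × B) R) : Matrix A A R :=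
  of fun a a' => ∑ b, ρ (a, b) (a', b)

variable [DecidableEq A] [DecidableEq B]

theorem sum_one_kronecker_single_self [Semiring R] :
    ∑ b : B, (1 : Matrix A A R) ⊗ₖ single b b 1 = 1 := by
  ext ⟨a, i⟩ ⟨a', j⟩
  simp only [Matrix.sum_apply, kroneckerMap_apply, one_apply, single_apply, ite_and, mul_ite,
    mul_one, mul_zero, Finset.sum_ite_eq', Finset.mem_univ, if_true, Prod.mk.injEq]
  split_ifs <;> rfl

theorem partialTraceRight_kronecker_one [Fintype A] [CommSemiring R] [StarRing R]
    (ρ : Matrix (A × B) (A × B) R) :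
    partialTraceRight ρ ⊗ₖ 1 =
      ∑ b, ∑ c, ((1 : Matrix A A R) ⊗ₖ single c b 1)ᴴ * ρ * (1 ⊗ₖ single c b 1) := by
  ext ⟨a, i⟩ ⟨a', j⟩
  simp [conjTranspose_kronecker, partialTraceRight, Matrix.sum_apply, mul_apply,
    Fintype.sum_prod_type, one_apply, single_apply, ite_and, eq_comm (a := j)]

end PartialTrace

end Matrix

theorem stmt_0_general {A B : Type} [Fintype A] [Fintype B] [DecidableEq A] [DecidableEq B]
    (ρ : Matrix (A × B) (A × B) ℂ) (hρ : ρ.PosSemidef) :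
    ((((Fintype.card B : ℂ)) ^ 2 •
        ((Matrix.of fun a a' => ∑ b, ρ (a, b) (a', b)) ⊗ₖ
          (((Fintype.card B : ℂ))⁻¹ • (1 : Matrix B B ℂ)))) - ρ).PosSemidef := by
  set d := Fintype.card B
  let K : B → B → Matrix (A × B) (A × B) ℂ := fun c b => (1 : Matrix A A ℂ) ⊗ₖ single c b 1
  -- `d ^ 2 * d⁻¹ = d` holds also for `d = 0`
  have hscale : (d : ℂ) ^ 2 • (partialTraceRight ρ ⊗ₖ ((d : ℂ)⁻¹ • (1 : Matrix B B ℂ))) =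
      d • (partialTraceRight ρ ⊗ₖ 1) := by
    rw [kronecker_smul, smul_smul, sq, mul_self_mul_inv, Nat.cast_smul_eq_nsmul]
  rw [← le_iff]
  change ρ ≤ (d : ℂ) ^ 2 • (partialTraceRight ρ ⊗ₖ ((d : ℂ)⁻¹ • (1 : Matrix B B ℂ)))
  calc ρ = (∑ b, K b b)ᴴ * ρ * ∑ b, K b b := by simp [K, sum_one_kronecker_single_self]
    _ ≤ d • ∑ b, (K b b)ᴴ * ρ * K b b := conjTranspose_sum_mul_mul_sum_le hρ _
    _ ≤ d • ∑ b, ∑ c, (K c b)ᴴ * ρ * K c b := by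
      gcongr with b
      exact Finset.single_le_sum (fun c _ => (hρ.conjTranspose_mul_mul_same (K c b)).nonneg)
        (Finset.mem_univ b)
    _ = _ := by rw [hscale, partialTraceRight_kronecker_one]

/-- For any bipartite quantum state ρ_AB on H_A ⊗ H_B with marginal
ρ_A = Tr_B(ρ_AB), we have ρ_AB ≤ dim(H_B)² · (ρ_A ⊗ ω_B), where ω_B = I/dim(H_B). -/
theorem stmt_0 {A B : Type} [Fintype A] [Fintype B] [DecidableEq A] [DecidableEq B]
    (ρ : Matrix (A × B) (A × B) ℂ) (hρ : ρ.PosSemidef) (htr : (ρ.trace).re ≤ 1) :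
    ((((Fintype.card B : ℂ)) ^ 2 •
        ((Matrix.of fun a a' => ∑ b, ρ (a, b) (a', b)) ⊗ₖ
          (((Fintype.card B : ℂ))⁻¹ • (1 : Matrix B B ℂ)))) - ρ).PosSemidef :=
  stmt_0_general ρ hρ
end

section
/- (Approximate inner-product reconstruction lower bound.) With notation as in the exact case, suppose instead U(|0⟩|ψ_x⟩|y⟩|0⟩) = α_{x,y}|IP(x,y)⟩|G_{x,y}⟩ + β_{x,y}|1 ⊕ IP(x,y)⟩|B_{x,y}⟩ with |α_{x,y}|² + |β_{x,y}|² = 1, and define ε_x by E_y[|β_{x,y}|²] = 1/2 − ε_x (expectation over uniform y ∈ {0,1}^n). Then the reconstruction circuit (uniform superposition, apply the coherent guessing unitary, apply inverse, Hadamards, measure) outputs (1, x) with probability at least 4ε_x². -/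
namespace Stmt11

/-- Hilbert space of the registers (z, y, e, anc) on which the guessing unitary acts. -/
abbrev Hsp (n : ℕ) (E A : Type) := ZMod 2 × (Fin n → ZMod 2) × E × A → ℂ

/-- Hilbert space with the extra phase qubit a: registers (a, z, y, e, anc). -/
abbrev H2sp (n : ℕ) (E A : Type) := ZMod 2 × (ZMod 2 × (Fin n → ZMod 2) × E × A) → ℂ

variable {n : ℕ} {E A : Type} [Fintype E] [Fintype A] [DecidableEq E] [DecidableEq A]

/-- Binary inner product. -/
def ip (x y : Fin n → ZMod 2) : ZMod 2 := ∑ i, x i * y i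

/-- |z⟩|y⟩ ⊗ φ with φ a joint state of the E and ancilla registers. -/
def vecH (z : ZMod 2) (y : Fin n → ZMod 2) (φ : E × A → ℂ) : Hsp n E A :=
  fun q => (if q.1 = z then 1 else 0) * (if q.2.1 = y then 1 else 0) * φ (q.2.2.1, q.2.2.2)

/-- |z⟩|y⟩|ψ⟩|a₀⟩. -/
def tensorH (a0 : A) (z : ZMod 2) (y : Fin n → ZMod 2) (ψ : E → ℂ) : Hsp n E A :=
  vecH z y fun q => ψ q.1 * (if q.2 = a0 then 1 else 0)

/-- Lift an operator on the (z,y,e,anc) registers to the full space (identity on a). -/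
def liftF (T : Hsp n E A → Hsp n E A) : H2sp n E A → H2sp n E A :=
  fun f p => T (fun q => f (p.1, q)) p.2

/-- CNOT from the z register onto the phase qubit a. -/
def cnot (f : H2sp n E A) : H2sp n E A := fun p => f (p.1 + p.2.1, p.2)

/-- Hadamard gates on the a-qubit and the n qubits of the y register. -/
noncomputable def had2 (f : H2sp n E A) : H2sp n E A :=
  fun p => ((Real.sqrt (2 ^ (n + 1)) : ℝ) : ℂ)⁻¹ *
    ∑ b : ZMod 2, ∑ w : Fin n → ZMod 2,
      (-1 : ℂ) ^ ((p.1 * b + ∑ i, p.2.2.1 i * w i).val) *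
        f (b, (p.2.1, w, p.2.2.2.1, p.2.2.2.2))

/-- Initial state (1/√2^{n+1}) Σ_{a,y} (−1)^a |a⟩|0_z⟩|y⟩|ψ⟩|a₀⟩. -/
noncomputable def init2 (a0 : A) (ψ : E → ℂ) : H2sp n E A :=
  fun p => ((Real.sqrt (2 ^ (n + 1)) : ℝ) : ℂ)⁻¹ *
    ∑ a : ZMod 2, ∑ y : Fin n → ZMod 2,
      (-1 : ℂ) ^ a.val * (if p.1 = a then 1 else 0) * tensorH a0 0 y ψ p.2

end Stmt11

/-!
Phase kickback: the phase qubit starts in |−⟩, so the CNOT applied after `U₀` multiplies the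
`z`-branch by (−1)^z. Hence `U₀|0⟩|y⟩|ψ⟩|a₀⟩` turns into
(−1)^{x·y} (U₀|0⟩|y⟩|ψ⟩|a₀⟩ − 2β_y |x·y+1⟩|y⟩|B_y⟩), the ideal branch plus an error controlled
by β_y. Pulling back through `U₀` and the Hadamards, the amplitude of |1⟩|0⟩|x⟩|ψ⟩|a₀⟩ in the
final state is 2^{-n} Σ_y (1 − 2|β_y|²) = 2ε, and by Cauchy–Schwarz the probability of the
outcome (1, x) is at least its squared modulus.
-/

open Finset

section Signs

variable {R : Type*} [Ring R]

lemma neg_one_pow_val_add (u v : ZMod 2) :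
    (-1 : R) ^ (u + v).val = (-1) ^ u.val * (-1) ^ v.val := by
  rw [ZMod.val_add, ← pow_add, ← neg_one_pow_eq_pow_mod_two]

lemma neg_one_pow_mul_self (k : ℕ) : (-1 : R) ^ k * (-1) ^ k = 1 := by
  rw [← pow_add, ← two_mul, pow_mul, neg_one_sq, one_pow]

end Signs

section DotProduct

variable {ι 𝕜 : Type*} [Fintype ι] [RCLike 𝕜]

lemma star_dotProduct_of_rightInverse {U V : (ι → 𝕜) → ι → 𝕜}
    (hU : ∀ f g, star (U f) ⬝ᵥ U g = star f ⬝ᵥ g) (hUV : ∀ h, U (V h) = h) (f h : ι → 𝕜) :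
    star f ⬝ᵥ V h = star (U f) ⬝ᵥ h := by
  rw [← hU, hUV]

lemma star_dotProduct_self_of_sum_norm_sq {φ : ι → 𝕜} (hφ : ∑ i, ‖φ i‖ ^ 2 = 1) :
    star φ ⬝ᵥ φ = 1 := by
  simp only [dotProduct, Pi.star_apply, ← starRingEnd_apply, RCLike.conj_mul]
  exact_mod_cast hφ

lemma norm_star_dotProduct_sq_le (ψ φ : ι → 𝕜) :
    ‖star ψ ⬝ᵥ φ‖ ^ 2 ≤ (∑ i, ‖ψ i‖ ^ 2) * ∑ i, ‖φ i‖ ^ 2 :=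
  calc ‖star ψ ⬝ᵥ φ‖ ^ 2 ≤ (∑ i, ‖ψ i‖ * ‖φ i‖) ^ 2 := by
        gcongr
        refine (norm_sum_le _ _).trans_eq ?_
        simp
    _ ≤ _ := sum_mul_sq_le_sq_mul_sq _ _ _

end DotProduct

namespace Stmt11

section Circuit

variable {n : ℕ} {E A : Type}

def slice (f : H2sp n E A) (b : ZMod 2) : Hsp n E A := fun q => f (b, q)

def pauliZ : Hsp n E A →ₗ[ℂ] Hsp n E A where
  toFun f q := (-1 : ℂ) ^ q.1.val * f q
  map_add' f g := by ext q; simp [mul_add]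
  map_smul' c f := by ext q; simp [mul_left_comm]

lemma pauliZ_vecH (z : ZMod 2) (y : Fin n → ZMod 2) (φ : E × A → ℂ) :
    pauliZ (vecH z y φ) = (-1 : ℂ) ^ z.val • vecH z y φ := by
  ext q
  by_cases h : q.1 = z <;> simp [pauliZ, vecH, h]

lemma pauliZ_flip (a b : ℂ) (z : ZMod 2) (y : Fin n → ZMod 2) (φ φ' : E × A → ℂ) :
    pauliZ (a • vecH z y φ + b • vecH (z + 1) y φ') =
      (-1 : ℂ) ^ z.val •
        (a • vecH z y φ + b • vecH (z + 1) y φ' - (2 * b) • vecH (z + 1) y φ') := by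
  rw [map_add, map_smul, map_smul, pauliZ_vecH, pauliZ_vecH, neg_one_pow_val_add]
  simp only [ZMod.val_one, pow_one]
  module

noncomputable def hadNorm (n : ℕ) : ℂ := ((Real.sqrt (2 ^ (n + 1)) : ℝ) : ℂ)⁻¹

lemma two_mul_hadNorm_sq : 2 * hadNorm n ^ 2 = (((2 : ℝ) ^ n)⁻¹ : ℝ) := by
  rw [hadNorm, inv_pow, ← Complex.ofReal_pow, Real.sq_sqrt (by positivity)]
  push_cast
  rw [pow_succ, mul_inv, mul_left_comm, mul_inv_cancel₀ two_ne_zero, mul_one]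

lemma slice_liftF (T : Hsp n E A → Hsp n E A) (f : H2sp n E A) (b : ZMod 2) :
    slice (liftF T f) b = T (slice f b) := rfl

lemma slice_cnot_of_slice_eq {f : H2sp n E A} {g : Hsp n E A}
    (hf : ∀ b, slice f b = (-1 : ℂ) ^ b.val • g) (b : ZMod 2) :
    slice (cnot f) b = (-1 : ℂ) ^ b.val • pauliZ g := by
  ext q
  change slice f (b + q.1) q = _
  simp [hf, neg_one_pow_val_add, pauliZ, mul_assoc]

lemma had2_one_of_slice_eq {f : H2sp n E A} {g : Hsp n E A}
    (hf : ∀ b, slice f b = (-1 : ℂ) ^ b.val • g) (z : ZMod 2) (x : Fin n → ZMod 2) (e : E)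
    (a : A) :
    had2 f (1, (z, x, e, a)) = 2 * hadNorm n * ∑ w, (-1 : ℂ) ^ (ip x w).val * g (z, w, e, a) := by
  have hterm : ∀ (b : ZMod 2) (w : Fin n → ZMod 2),
      (-1 : ℂ) ^ ((1 * b + ∑ i, x i * w i).val) * f (b, (z, w, e, a))
        = (-1 : ℂ) ^ (ip x w).val * g (z, w, e, a) := by
    intro b w
    have hfb : f (b, (z, w, e, a)) = (-1 : ℂ) ^ b.val * g (z, w, e, a) :=
      congrFun (hf b) (z, w, e, a)
    rw [one_mul, hfb, neg_one_pow_val_add, ← ip]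
    linear_combination
      (-1 : ℂ) ^ (ip x w).val * g (z, w, e, a) * neg_one_pow_mul_self (R := ℂ) b.val
  simp only [had2, hterm, sum_const, card_univ, ZMod.card, nsmul_eq_mul, hadNorm]
  push_cast
  ring

variable [DecidableEq A]

lemma slice_init2 (a0 : A) (ψ : E → ℂ) (b : ZMod 2) :
    slice (init2 a0 ψ : H2sp n E A) b = (-1 : ℂ) ^ b.val • hadNorm n • ∑ y, tensorH a0 0 y ψ := by
  ext q
  simp [slice, init2, hadNorm, mul_sum, mul_left_comm]

lemma slice_reconstruction (U0 U0inv : Hsp n E A →ₗ[ℂ] Hsp n E A) (a0 : A) (ψ : E → ℂ)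
    (b : ZMod 2) :
    slice (liftF (fun v => U0inv v) (cnot (liftF (fun v => U0 v) (init2 a0 ψ)))) b =
      (-1 : ℂ) ^ b.val • hadNorm n • U0inv (pauliZ (U0 (∑ y, tensorH a0 0 y ψ))) := by
  have hU0 : ∀ b, slice (liftF (fun v => U0 v) (init2 a0 ψ)) b =
      (-1 : ℂ) ^ b.val • hadNorm n • U0 (∑ y, tensorH a0 0 y ψ) := by
    intro b
    rw [slice_liftF, slice_init2, map_smul, map_smul]
  rw [slice_liftF, slice_cnot_of_slice_eq hU0, map_smul, map_smul, map_smul]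

end Circuit

section Overlap

variable {n : ℕ} {E A : Type} [Fintype E] [Fintype A]

lemma star_vecH_dotProduct (z : ZMod 2) (y : Fin n → ZMod 2) (φ : E × A → ℂ) (g : Hsp n E A) :
    star (vecH z y φ) ⬝ᵥ g = ∑ p : E × A, star (φ p) * g (z, y, p.1, p.2) := by
  simp [dotProduct, vecH, Fintype.sum_prod_type, apply_ite (starRingEnd ℂ), ite_mul, sum_ite_eq']

lemma star_vecH_dotProduct_vecH (z z' : ZMod 2) (y y' : Fin n → ZMod 2) (φ φ' : E × A → ℂ) :
    star (vecH z y φ) ⬝ᵥ vecH z' y' φ' = if z = z' ∧ y = y' then star φ ⬝ᵥ φ' else 0 := by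
  rw [star_vecH_dotProduct]
  split_ifs with h
  · simp [h, vecH, dotProduct]
  · refine sum_eq_zero fun p _ => ?_
    rcases not_and_or.mp h with hne | hne <;> simp [vecH, hne]

variable [DecidableEq A]

lemma star_tensorH_dotProduct (a0 : A) (y : Fin n → ZMod 2) (ψ : E → ℂ) (g : Hsp n E A) :
    star (tensorH a0 0 y ψ) ⬝ᵥ g = ∑ e, star (ψ e) * g (0, y, e, a0) := by
  simp [tensorH, star_vecH_dotProduct, Fintype.sum_prod_type, apply_ite (starRingEnd ℂ), ite_mul]

lemma star_tensorH_dotProduct_tensorH {ψ : E → ℂ} (hψ : ∑ e, ‖ψ e‖ ^ 2 = 1) (a0 : A)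
    (w y : Fin n → ZMod 2) :
    star (tensorH a0 0 w ψ) ⬝ᵥ tensorH a0 0 y ψ = if w = y then 1 else 0 := by
  rw [star_tensorH_dotProduct]
  split_ifs with h
  · subst h
    simpa [tensorH, vecH, dotProduct] using star_dotProduct_self_of_sum_norm_sq hψ
  · simp [tensorH, vecH, h]

def ipPhaseState (a0 : A) (x : Fin n → ZMod 2) (ψ : E → ℂ) : Hsp n E A :=
  ∑ w, (-1 : ℂ) ^ (ip x w).val • tensorH a0 0 w ψ

lemma star_ipPhaseState_dotProduct (a0 : A) (x : Fin n → ZMod 2) (ψ : E → ℂ) (g : Hsp n E A) :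
    star (ipPhaseState a0 x ψ) ⬝ᵥ g =
      ∑ e, star (ψ e) * ∑ w, (-1 : ℂ) ^ (ip x w).val * g (0, w, e, a0) := by
  simp only [ipPhaseState, star_sum, star_smul, sum_dotProduct, smul_dotProduct,
    star_tensorH_dotProduct, mul_sum, smul_eq_mul]
  rw [sum_comm]
  simp [mul_left_comm]

lemma star_ipPhaseState_dotProduct_tensorH {ψ : E → ℂ} (hψ : ∑ e, ‖ψ e‖ ^ 2 = 1) (a0 : A)
    (x y : Fin n → ZMod 2) :
    star (ipPhaseState a0 x ψ) ⬝ᵥ tensorH a0 0 y ψ = (-1 : ℂ) ^ (ip x y).val := by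
  simp [ipPhaseState, star_sum, sum_dotProduct, star_tensorH_dotProduct_tensorH hψ]

lemma star_map_ipPhaseState_dotProduct_vecH {a0 : A} {x : Fin n → ZMod 2} {ψ : E → ℂ}
    {U0 : Hsp n E A →ₗ[ℂ] Hsp n E A} {α β : (Fin n → ZMod 2) → ℂ}
    {G B : (Fin n → ZMod 2) → E × A → ℂ}
    (hU0 : ∀ y, U0 (tensorH a0 0 y ψ) =
      α y • vecH (ip x y) y (G y) + β y • vecH (ip x y + 1) y (B y))
    (hB : ∀ y, ∑ q : E × A, ‖B y q‖ ^ 2 = 1) (y : Fin n → ZMod 2) :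
    star (U0 (ipPhaseState a0 x ψ)) ⬝ᵥ vecH (ip x y + 1) y (B y) =
      (-1 : ℂ) ^ (ip x y).val * star (β y) := by
  simp only [ipPhaseState, map_sum, map_smul, hU0, star_sum, star_smul, star_add,
    sum_dotProduct, smul_dotProduct, add_dotProduct, star_vecH_dotProduct_vecH]
  rw [sum_eq_single y (fun w _ hw => by simp [hw]) (by simp)]
  simp [star_dotProduct_self_of_sum_norm_sq (hB y)]

lemma star_map_ipPhaseState_dotProduct_pauliZ {a0 : A} {x : Fin n → ZMod 2} {ψ : E → ℂ}
    (hψ : ∑ e, ‖ψ e‖ ^ 2 = 1) {U0 : Hsp n E A →ₗ[ℂ] Hsp n E A}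
    (hiso : ∀ f g, star (U0 f) ⬝ᵥ U0 g = star f ⬝ᵥ g) {α β : (Fin n → ZMod 2) → ℂ}
    {G B : (Fin n → ZMod 2) → E × A → ℂ}
    (hU0 : ∀ y, U0 (tensorH a0 0 y ψ) =
      α y • vecH (ip x y) y (G y) + β y • vecH (ip x y + 1) y (B y))
    (hB : ∀ y, ∑ q : E × A, ‖B y q‖ ^ 2 = 1) :
    star (U0 (ipPhaseState a0 x ψ)) ⬝ᵥ pauliZ (U0 (∑ y, tensorH a0 0 y ψ)) =
      ((∑ y, (1 - 2 * ‖β y‖ ^ 2) : ℝ) : ℂ) := by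
  rw [map_sum, map_sum, dotProduct_sum]
  push_cast
  refine sum_congr rfl fun y _ => ?_
  rw [hU0 y, pauliZ_flip, ← hU0 y, dotProduct_smul, dotProduct_sub, dotProduct_smul, hiso,
    star_ipPhaseState_dotProduct_tensorH hψ, star_map_ipPhaseState_dotProduct_vecH hU0 hB,
    smul_eq_mul, smul_eq_mul]
  have hβ : β y * star (β y) = ‖β y‖ ^ 2 := Complex.mul_conj' (β y)
  linear_combination (1 - 2 * β y * star (β y)) * neg_one_pow_mul_self (R := ℂ) (ip x y).val
    - 2 * hβ

lemma sum_star_mul_reconstruction (a0 : A) (x : Fin n → ZMod 2) (ψ : E → ℂ)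
    {U0 U0inv : Hsp n E A →ₗ[ℂ] Hsp n E A} (hiso : ∀ f g, star (U0 f) ⬝ᵥ U0 g = star f ⬝ᵥ g)
    (hinv : ∀ f, U0 (U0inv f) = f) :
    ∑ e, star (ψ e) * had2 (liftF (fun v => U0inv v)
        (cnot (liftF (fun v => U0 v) (init2 a0 ψ)))) (1, (0, x, e, a0)) =
      2 * hadNorm n ^ 2 *
        (star (U0 (ipPhaseState a0 x ψ)) ⬝ᵥ pauliZ (U0 (∑ y, tensorH a0 0 y ψ))) := by
  have hmeas := star_ipPhaseState_dotProduct a0 x ψ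
    (hadNorm n • U0inv (pauliZ (U0 (∑ y, tensorH a0 0 y ψ))))
  rw [dotProduct_smul, star_dotProduct_of_rightInverse hiso hinv, smul_eq_mul] at hmeas
  simp only [had2_one_of_slice_eq (slice_reconstruction U0 U0inv a0 ψ)]
  rw [pow_two, mul_assoc 2, mul_assoc (hadNorm n), hmeas, mul_sum, mul_sum]
  exact sum_congr rfl fun e _ => by ring

end Overlap

variable {n : ℕ} {E A : Type} [Fintype E] [Fintype A] [DecidableEq E] [DecidableEq A]

theorem stmt_11_general (a0 : A) (x : Fin n → ZMod 2) (ψ : E → ℂ) (hψ : ∑ e, ‖ψ e‖ ^ 2 = 1)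
    (U0 U0inv : Hsp n E A →ₗ[ℂ] Hsp n E A)
    (hiso : ∀ f g : Hsp n E A,
      (∑ q, (starRingEnd ℂ) (U0 f q) * U0 g q) = ∑ q, (starRingEnd ℂ) (f q) * g q)
    (hinv2 : ∀ f, U0 (U0inv f) = f)
    (α β : (Fin n → ZMod 2) → ℂ) (G B : (Fin n → ZMod 2) → E × A → ℂ)
    (hB : ∀ y, ∑ q : E × A, ‖B y q‖ ^ 2 = 1)
    (hU0 : ∀ y, U0 (tensorH a0 0 y ψ) =
      α y • vecH (ip x y) y (G y) + β y • vecH (ip x y + 1) y (B y))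
    (ε : ℝ) (hε : ((2 : ℝ) ^ n)⁻¹ * ∑ y : Fin n → ZMod 2, ‖β y‖ ^ 2 = 1 / 2 - ε) :
    4 * ε ^ 2 ≤
      ∑ z : ZMod 2, ∑ e : E, ∑ a : A,
        ‖had2 (liftF (fun v => U0inv v)
            (cnot (liftF (fun v => U0 v) (init2 a0 ψ)))) (1, (z, x, e, a))‖ ^ 2 := by
  set F := had2 (liftF (fun v => U0inv v) (cnot (liftF (fun v => U0 v) (init2 a0 ψ))))
  have hmean : ((2 : ℝ) ^ n)⁻¹ * ∑ y : Fin n → ZMod 2, (1 - 2 * ‖β y‖ ^ 2) = 2 * ε := by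
    have hcard : ∑ _y : Fin n → ZMod 2, (1 : ℝ) = 2 ^ n := by simp [ZMod.card]
    rw [sum_sub_distrib, hcard, ← mul_sum, mul_sub, inv_mul_cancel₀ (by positivity),
      mul_left_comm, hε]
    ring
  have hoverlap : star ψ ⬝ᵥ (fun e => F (1, (0, x, e, a0))) = ((2 * ε : ℝ) : ℂ) := by
    change ∑ e, star (ψ e) * F (1, (0, x, e, a0)) = _
    rw [sum_star_mul_reconstruction a0 x ψ hiso hinv2,
      star_map_ipPhaseState_dotProduct_pauliZ hψ hiso hU0 hB, two_mul_hadNorm_sq,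
      ← Complex.ofReal_mul, hmean]
  calc 4 * ε ^ 2 = ‖star ψ ⬝ᵥ fun e => F (1, (0, x, e, a0))‖ ^ 2 := by
        rw [hoverlap, Complex.norm_real, Real.norm_eq_abs, sq_abs]
        ring
    _ ≤ ∑ e, ‖F (1, (0, x, e, a0))‖ ^ 2 := by
        simpa [hψ] using norm_star_dotProduct_sq_le ψ fun e => F (1, (0, x, e, a0))
    _ ≤ ∑ z, ∑ e, ∑ a, ‖F (1, (z, x, e, a))‖ ^ 2 := by
        refine le_trans ?_ (single_le_sum (fun z _ => by positivity) (mem_univ 0))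
        exact sum_le_sum fun e _ =>
          single_le_sum (f := fun a => ‖F (1, (0, x, e, a))‖ ^ 2) (fun a _ => by positivity)
            (mem_univ a0)

/-- approximate inner-product reconstruction lower bound: if the coherent
guessing unitary U₀ succeeds on |0⟩|y⟩|ψ_x⟩|0⟩ with good amplitude α_y and bad amplitude
β_y, and E_y[|β_y|²] = 1/2 − ε, then the reconstruction circuit
(Hadamards ∘ U₀† ∘ CNOT ∘ U₀ applied to the signed uniform superposition) outputs (1, x)
on the first n+1 measured qubits with probability at least 4ε². -/
theorem stmt_11 (a0 : A) (x : Fin n → ZMod 2) (ψ : E → ℂ) (hψ : ∑ e, ‖ψ e‖ ^ 2 = 1)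
    (U0 U0inv : Hsp n E A →ₗ[ℂ] Hsp n E A)
    (hiso : ∀ f g : Hsp n E A,
      (∑ q, (starRingEnd ℂ) (U0 f q) * U0 g q) = ∑ q, (starRingEnd ℂ) (f q) * g q)
    (hinv1 : ∀ f, U0inv (U0 f) = f) (hinv2 : ∀ f, U0 (U0inv f) = f)
    (α β : (Fin n → ZMod 2) → ℂ) (G B : (Fin n → ZMod 2) → E × A → ℂ)
    (hG : ∀ y, ∑ q : E × A, ‖G y q‖ ^ 2 = 1) (hB : ∀ y, ∑ q : E × A, ‖B y q‖ ^ 2 = 1)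
    (hαβ : ∀ y, ‖α y‖ ^ 2 + ‖β y‖ ^ 2 = 1)
    (hU0 : ∀ y, U0 (tensorH a0 0 y ψ) =
      α y • vecH (ip x y) y (G y) + β y • vecH (ip x y + 1) y (B y))
    (ε : ℝ) (hε : ((2 : ℝ) ^ n)⁻¹ * ∑ y : Fin n → ZMod 2, ‖β y‖ ^ 2 = 1 / 2 - ε) :
    4 * ε ^ 2 ≤
      ∑ z : ZMod 2, ∑ e : E, ∑ a : A,
        ‖had2 (liftF (fun v => U0inv v)
            (cnot (liftF (fun v => U0 v) (init2 a0 ψ)))) (1, (z, x, e, a))‖ ^ 2 :=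
  stmt_11_general a0 x ψ hψ U0 U0inv hiso hinv2 α β G B hB hU0 ε hε

end Stmt11
end
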